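/- arXiv:0808.2789 — 2 statements merged into one kernel-verified Lean document; each statement's English description precedes it below -/
import Mathlib

section
/- Let G be a group with a surjective homomorphism φ : G ↠ ℤ whose kernel K is abelian, and fix a splitting α : ℤ → G of φ. Let S be a generating set for G symmetrized about ℤ, F_S the free group on S, and π : F_S ↠ G the natural projection. Then for every w ∈ F_S with π(w) ∈ K, we have π(w) = π( (w̄)⁻¹ ), where w̄ denotes the letterwise bar involution of w. -/
/-! The bar map `g ↦ α(φ g) g⁻¹ α(φ g)` is a group endomorphism of `G`: for `a = φ g` and
`b = φ h`, both `g⁻¹ α(a)` and `α(b) h⁻¹` lie in the abelian kernel, and swapping them turns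
`bar (g h) = α(a) (α(b) h⁻¹) (g⁻¹ α(a)) α(b)` into `bar g * bar h`. Hence the product of the bars
of the letters of `w` is `bar (π w)`, which is `π(w)⁻¹` as soon as `φ (π w) = 0`. -/

section BarMap

variable {G A : Type*} [Group G] [AddGroup A] {φ : G → A} {α : A → G}

def barMap (φ : G → A) (α : A → G) (g : G) : G := α (φ g) * g⁻¹ * α (φ g)

lemma map_inv_of_map_mul (hφmul : ∀ x y : G, φ (x * y) = φ x + φ y) (g : G) :
    φ g⁻¹ = -φ g := by
  have hφone : φ 1 = 0 := by simpa using hφmul 1 1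
  refine eq_neg_of_add_eq_zero_left ?_
  rw [← hφmul, inv_mul_cancel, hφone]

lemma barMap_mul (hφmul : ∀ x y : G, φ (x * y) = φ x + φ y)
    (hker : ∀ x y : G, φ x = 0 → φ y = 0 → x * y = y * x)
    (hαadd : ∀ m n : A, α (m + n) = α m * α n) (hαsplit : ∀ n : A, φ (α n) = n) (g h : G) :
    barMap φ α (g * h) = barMap φ α g * barMap φ α h := by
  have hu : φ (g⁻¹ * α (φ g)) = 0 := by
    rw [hφmul, map_inv_of_map_mul hφmul, hαsplit, neg_add_cancel]
  have hv : φ (α (φ h) * h⁻¹) = 0 := by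
    rw [hφmul, map_inv_of_map_mul hφmul, hαsplit, add_neg_cancel]
  have hswap := hker _ _ hv hu
  calc barMap φ α (g * h)
      = α (φ g) * ((α (φ h) * h⁻¹) * (g⁻¹ * α (φ g))) * α (φ h) := by
        simp only [barMap, hφmul, hαadd, mul_inv_rev, mul_assoc]
    _ = barMap φ α g * barMap φ α h := by
        rw [hswap]
        simp only [barMap, mul_assoc]

lemma barMap_of_map_eq_zero (hαadd : ∀ m n : A, α (m + n) = α m * α n) {g : G} (hg : φ g = 0) :
    barMap φ α g = g⁻¹ := by
  have hα0 : α 0 = 1 := by simpa using hαadd 0 0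
  rw [barMap, hg, hα0, one_mul, mul_one]

def barHom (hφmul : ∀ x y : G, φ (x * y) = φ x + φ y)
    (hker : ∀ x y : G, φ x = 0 → φ y = 0 → x * y = y * x)
    (hαadd : ∀ m n : A, α (m + n) = α m * α n) (hαsplit : ∀ n : A, φ (α n) = n) : G →* G :=
  MonoidHom.mk' (barMap φ α) (barMap_mul hφmul hker hαadd hαsplit)

end BarMap

theorem bar_involution_prod_general {G : Type*} [Group G] (φ : G → ℤ)
    (hφmul : ∀ x y : G, φ (x * y) = φ x + φ y)
    (hker : ∀ x y : G, φ x = 0 → φ y = 0 → x * y = y * x)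
    (α : ℤ → G) (hαadd : ∀ m n : ℤ, α (m + n) = α m * α n)
    (hαsplit : ∀ n : ℤ, φ (α n) = n)
    (S : Set G) :
    ∀ l : List G, (∀ x ∈ l, x ∈ S ∨ x⁻¹ ∈ S) → φ l.prod = 0 →
      (l.map (fun g => α (φ g) * g⁻¹ * α (φ g))).prod = (l.prod)⁻¹ := by
  intro l _ hl
  calc (l.map (fun g => α (φ g) * g⁻¹ * α (φ g))).prod
      = (l.map (barHom hφmul hker hαadd hαsplit)).prod := rfl
    _ = barMap φ α l.prod := (map_list_prod _ l).symm
    _ = l.prod⁻¹ := barMap_of_map_eq_zero hαadd hl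

/-- Let `G` be a group with a surjective homomorphism `φ : G ↠ ℤ`
with abelian kernel `K`, and fix a splitting `α` of `φ`. Let `S` be a generating set
for `G` symmetrized about `ℤ`, so that the bar involution `g ↦ α(φ g)·g⁻¹·α(φ g)`
(sending `α(n)k` to `α(n)k⁻¹`) preserves `S ∪ S⁻¹`. Then for every word `w` in
`S ∪ S⁻¹` with `π(w) ∈ K`, one has `π(w) = π((w̄)⁻¹)`, where `w̄` is the letterwise
bar of `w`; equivalently, the product of the bars of the letters of `w` equals
`π(w)⁻¹`. -/
theorem bar_involution_prod {G : Type*} [Group G] (φ : G → ℤ)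
    (hφmul : ∀ x y : G, φ (x * y) = φ x + φ y) (hφsurj : Function.Surjective φ)
    (hker : ∀ x y : G, φ x = 0 → φ y = 0 → x * y = y * x)
    (α : ℤ → G) (hαadd : ∀ m n : ℤ, α (m + n) = α m * α n)
    (hαsplit : ∀ n : ℤ, φ (α n) = n)
    (S : Set G) (hSgen : Subgroup.closure S = ⊤)
    (hsym : ∀ s : G, (s ∈ S ∨ s⁻¹ ∈ S) →
      ((α (φ s) * s⁻¹ * α (φ s)) ∈ S ∨ (α (φ s) * s⁻¹ * α (φ s))⁻¹ ∈ S)) :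
    ∀ l : List G, (∀ x ∈ l, x ∈ S ∨ x⁻¹ ∈ S) → φ l.prod = 0 →
      (l.map (fun g => α (φ g) * g⁻¹ * α (φ g))).prod = (l.prod)⁻¹ :=
  bar_involution_prod_general φ hφmul hker α hαadd hαsplit S
end

section
/- (Splitting Lemma) Let K be a finite-rank torsion-free abelian group, T a hyperbolic automorphism of K, and L a full-rank lattice in K with T(L) ⊆ L and ⋃_{i∈ℤ} Tⁱ(L) = K. Let K_d = ⋂_{i∈ℤ} Tⁱ(L). Then there exist a finite-index subgroup K' of K containing K_d, invariant under T and T⁻¹, and a subgroup K_c of K', invariant under T and T⁻¹, such that K' = K_d ⊕ K_c (internal direct sum), and both quotients K/K_d and K/K_c are torsion-free. -/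
section VSetup

/-- The additive automorphism of `V` underlying a linear automorphism. -/
def linToAddAut {V : Type*} [AddCommGroup V] [Module ℝ V] (T : V ≃ₗ[ℝ] V) :
    AddAut V := T.toAddEquiv

/-- `L` is a full-rank lattice in the finite-dimensional real vector space `V`
(which plays the role of `K ⊗ ℝ`): `L` is the `ℤ`-span of an `ℝ`-basis of `V`. -/
def IsLatticeIn (V : Type*) [NormedAddCommGroup V] [NormedSpace ℝ V]
    (L : AddSubgroup V) : Prop :=
  ∃ b : Module.Basis (Fin (Module.finrank ℝ V)) ℝ V, L = AddSubgroup.closure (Set.range b)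

/-- `max_{a ∈ A} dist(Tⁱa, W)`. -/
noncomputable def maxDist {V : Type*} [NormedAddCommGroup V] [NormedSpace ℝ V]
    (T : V ≃ₗ[ℝ] V) (W : Submodule ℝ V) (A : Finset V) (i : ℤ) : ℝ :=
  sSup ((fun a => Metric.infDist ((T ^ i) a) (W : Set V)) '' ↑A)

end VSetup

/-!
Let `f ∈ ℤ[X]` be the characteristic polynomial of `T` on the lattice `L`, and `q` that of `T`
on `K_d`. Since `K_d` is a finitely generated free group on which `T` acts invertibly,
`q(0) = ±1`. Over `ℚ` write `f = g h` with `g ∣ qⁿ` and `h` coprime to `q`. Then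
`K_d = K ∩ ker g(T)`: on `K_d` the coprimality of `h` and `q` forces `g(T) = 0`; conversely
`L ∩ ker g(T)` is stable under `T⁻¹` because `qⁿ(T)` vanishes on it and has unit constant
term, and every element of `K` is moved into `L` by some `Tⁱ`.

Put `K_c = K ∩ ker h(T)` and `K' = K_d + K_c`. From `a g + b h = 1`, the operator `(b h)(T)` is
the projection onto `ker g(T)` along `ker h(T)`. Some multiple `N (b h)` has integer
coefficients, so `N (b h)(T)` maps `K` into `K_d`; as `K_d / N K_d` is finite, `K'` has finite
index in `K`.
-/

open Polynomial

theorem exists_mul_eq_dvd_pow_isCoprime {R : Type*} [CommRing R] [IsDomain R]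
    [IsPrincipalIdealRing R] (p : R) {f : R} (hf : f ≠ 0) :
    ∃ g h : R, g * h = f ∧ (∃ n : ℕ, g ∣ p ^ n) ∧ IsCoprime h p := by
  induction f using UniqueFactorizationMonoid.induction_on_prime with
  | h₁ => exact absurd rfl hf
  | h₂ u hu =>
    exact ⟨1, u, one_mul u, ⟨0, one_dvd _⟩, isCoprime_one_left.of_isCoprime_of_dvd_left hu.dvd⟩
  | h₃ a r ha hr ih =>
    obtain ⟨g, h, rfl, ⟨n, hg⟩, hh⟩ := ih ha
    by_cases hrp : r ∣ p
    · exact ⟨r * g, h, mul_assoc r g h, ⟨n + 1, pow_succ' p n ▸ mul_dvd_mul hrp hg⟩, hh⟩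
    · exact ⟨g, r * h, mul_left_comm g r h, ⟨n, hg⟩,
        ((hr.coprime_iff_not_dvd).2 hrp).mul_left hh⟩

section Invariant

variable {R M : Type*} [Semiring R] [AddCommGroup M] [Module R M]

def IsBiInvariant (T : M ≃ₗ[R] M) (S : AddSubgroup M) : Prop :=
  ∀ v ∈ S, T v ∈ S ∧ T.symm v ∈ S

variable {T : M ≃ₗ[R] M} {S S' : AddSubgroup M}

theorem IsBiInvariant.inf (hS : IsBiInvariant T S) (hS' : IsBiInvariant T S') :
    IsBiInvariant T (S ⊓ S') :=
  fun _ hv => ⟨⟨(hS _ hv.1).1, (hS' _ hv.2).1⟩, ⟨(hS _ hv.1).2, (hS' _ hv.2).2⟩⟩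

theorem IsBiInvariant.sup (hS : IsBiInvariant T S) (hS' : IsBiInvariant T S') :
    IsBiInvariant T (S ⊔ S') := by
  intro v hv
  obtain ⟨a, ha, b, hb, rfl⟩ := AddSubgroup.mem_sup.1 hv
  simp only [map_add]
  exact ⟨add_mem (AddSubgroup.mem_sup_left (hS a ha).1) (AddSubgroup.mem_sup_right (hS' b hb).1),
    add_mem (AddSubgroup.mem_sup_left (hS a ha).2) (AddSubgroup.mem_sup_right (hS' b hb).2)⟩

theorem IsBiInvariant.zpow_apply_mem (hS : IsBiInvariant T S) (i : ℤ) {v : M} (hv : v ∈ S) :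
    (T ^ i) v ∈ S := by
  induction i using Int.induction_on generalizing v with
  | zero => simpa using hv
  | succ i ih => rw [zpow_add_one]; exact ih (hS v hv).1
  | pred i ih => rw [zpow_sub_one]; exact ih (hS v hv).2

variable (T) in
def invariantCore (L : AddSubgroup M) : AddSubgroup M :=
  ⨅ i : ℤ, AddSubgroup.comap ((T ^ i).toLinearMap).toAddMonoidHom L

variable {L : AddSubgroup M}

theorem mem_invariantCore {v : M} : v ∈ invariantCore T L ↔ ∀ i : ℤ, (T ^ i) v ∈ L := by
  simp [invariantCore]

theorem invariantCore_le : invariantCore T L ≤ L :=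
  fun v hv => by simpa using mem_invariantCore.1 hv 0

theorem isBiInvariant_invariantCore : IsBiInvariant T (invariantCore T L) := by
  intro v hv
  simp only [mem_invariantCore] at hv ⊢
  exact ⟨fun i => by simpa [zpow_add_one] using hv (i + 1),
    fun i => by simpa [zpow_sub_one] using hv (i - 1)⟩

theorem IsBiInvariant.le_invariantCore (hS : IsBiInvariant T S) (hSL : S ≤ L) :
    S ≤ invariantCore T L :=
  fun _ hv => mem_invariantCore.2 fun i => hSL (hS.zpow_apply_mem i hv)

end Invariant

section IntPolynomial

variable {R M : Type*} [CommRing R] [AddCommGroup M] [Module R M]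

theorem aeval_int_apply_mem (A : Module.End R M) {S : AddSubgroup M} (hS : ∀ v ∈ S, A v ∈ S)
    (Z : ℤ[X]) {v : M} (hv : v ∈ S) : aeval A Z v ∈ S :=
  aeval_apply_smul_mem_of_le_comap' (q := S.toIntSubmodule) hv Z A fun w hw => hS w hw

theorem symm_apply_mem_of_aeval_eq_zero (T : M ≃ₗ[R] M) {S : AddSubgroup M}
    (hS : ∀ v ∈ S, T v ∈ S) {Z : ℤ[X]} (hZ : IsUnit (Z.coeff 0)) {v : M} (hv : v ∈ S)
    (hZv : aeval (T : Module.End R M) Z v = 0) : T.symm v ∈ S := by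
  obtain ⟨u, hu⟩ := hZ
  set w := aeval (T : Module.End R M) Z.divX v
  have hw : w ∈ S := aeval_int_apply_mem _ hS _ hv
  -- `Z = X * divX Z + C u` gives `T w + u • v = 0`
  have hTw : T w + (u : ℤ) • v = 0 := by
    rw [← hZv, ← X_mul_divX_add Z, ← hu]
    simp [w]
  have : T.symm v = -((u⁻¹ : ℤˣ) : ℤ) • w := by
    apply T.injective
    rw [LinearEquiv.apply_symm_apply, map_zsmul, eq_neg_of_add_eq_zero_left hTw, neg_smul, smul_neg,
      neg_neg, smul_smul, Units.inv_mul, one_smul]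
  rw [this]
  exact zsmul_mem hw _

theorem aeval_int_restrict_apply (A : Module.End R M) {S : AddSubgroup M}
    (hS : ∀ v ∈ S.toIntSubmodule, A.restrictScalars ℤ v ∈ S.toIntSubmodule) (Z : ℤ[X])
    (x : S.toIntSubmodule) :
    (aeval ((A.restrictScalars ℤ).restrict hS) Z x : M) = aeval A Z x := by
  induction Z using Polynomial.induction_on' with
  | add p q hp hq => simp [hp, hq]
  | monomial n c =>
    suffices ((((A.restrictScalars ℤ).restrict hS) ^ n) x : M) = (A ^ n) x by simp [this]
    induction n generalizing x with
    | zero => rfl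
    | succ n ih => simp only [pow_succ, Module.End.mul_apply, ih]; rfl

theorem exists_monic_aeval_eq_zero_of_fg (A : Module.End R M) {S : AddSubgroup M} (hS : S.FG)
    (hAS : ∀ v ∈ S, A v ∈ S) : ∃ Z : ℤ[X], Z.Monic ∧ ∀ v ∈ S, aeval A Z v = 0 := by
  have : Module.Finite ℤ S.toIntSubmodule :=
    Module.Finite.iff_fg.2 ((Submodule.fg_iff_addSubgroup_fg _).2 hS)
  obtain ⟨Z, hZ, hZA⟩ := LinearMap.exists_monic_and_aeval_eq_zero ℤ
    ((A.restrictScalars ℤ).restrict (p := S.toIntSubmodule) hAS)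
  refine ⟨Z, hZ, fun v hv => ?_⟩
  rw [← aeval_int_restrict_apply A hAS Z ⟨v, hv⟩, hZA]
  rfl

theorem exists_isUnit_coeff_zero_aeval_eq_zero_of_fg [IsAddTorsionFree M] (T : M ≃ₗ[R] M)
    {S : AddSubgroup M} (hS : S.FG) (hTS : IsBiInvariant T S) :
    ∃ Z : ℤ[X], IsUnit (Z.coeff 0) ∧ ∀ v ∈ S, aeval (T : Module.End R M) Z v = 0 := by
  have : Module.Finite ℤ S.toIntSubmodule :=
    Module.Finite.iff_fg.2 ((Submodule.fg_iff_addSubgroup_fg _).2 hS)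
  have : Module.Free ℤ S.toIntSubmodule := Module.free_of_finite_type_torsion_free'
  have hT : ∀ v ∈ S.toIntSubmodule, (T : Module.End R M).restrictScalars ℤ v ∈ S.toIntSubmodule :=
    fun v hv => (hTS v hv).1
  have hT' : ∀ v ∈ S.toIntSubmodule,
      (T.symm : Module.End R M).restrictScalars ℤ v ∈ S.toIntSubmodule :=
    fun v hv => (hTS v hv).2
  set A := ((T : Module.End R M).restrictScalars ℤ).restrict hT
  set B := ((T.symm : Module.End R M).restrictScalars ℤ).restrict hT'
  have hAB : A ∘ₗ B = LinearMap.id := by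
    ext x
    exact T.apply_symm_apply (x : M)
  have hdet : LinearMap.det A * LinearMap.det B = 1 := by
    rw [← LinearMap.det_comp, hAB, LinearMap.det_id]
  refine ⟨A.charpoly, ?_, fun v hv => ?_⟩
  · rw [LinearMap.det_eq_sign_charpoly_coeff] at hdet
    exact isUnit_of_mul_isUnit_right (IsUnit.of_mul_eq_one _ hdet)
  · rw [← aeval_int_restrict_apply _ hT _ ⟨v, hv⟩, LinearMap.aeval_self_charpoly]
    rfl

end IntPolynomial

theorem AddSubgroup.FG.of_le {G : Type*} [AddCommGroup G] {H K : AddSubgroup G} (hK : K.FG)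
    (hHK : H ≤ K) : H.FG :=
  (Submodule.fg_iff_addSubgroup_fg H.toIntSubmodule).1
    (((Submodule.fg_iff_addSubgroup_fg K.toIntSubmodule).2 hK).of_le hHK)

theorem AddSubgroup.FG.relIndex_ne_zero_of_zsmul_mem {G : Type*} [AddCommGroup G]
    [IsAddTorsionFree G] {D K H : AddSubgroup G} (hD : D.FG) (π : G →+ G) {n : ℤ} (hn : n ≠ 0)
    (hK : ∀ k ∈ K, n • π k ∈ D) (hH : ∀ k ∈ K, π k ∈ D → k ∈ H) : H.relIndex K ≠ 0 := by
  set μ : G →+ G := zsmulAddGroupHom n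
  have : AddGroup.FG D := (AddGroup.fg_iff_addSubgroup_fg D).2 hD
  -- `D / n D` is finite; pulling back along `n • ·` makes `D` of finite index in `{x | n • x ∈ D}`.
  have hfin : (D.map μ).relIndex D ≠ 0 := by
    have : Finite (D ⧸ (D.map μ).addSubgroupOf D) := by
      refine AddCommGroup.finite_of_fg_isAddTorsion _ fun q => ?_
      induction q using QuotientAddGroup.induction_on with
      | H x =>
        refine isOfFinAddOrder_iff_zsmul_eq_zero.2 ⟨n, hn, ?_⟩
        rw [← QuotientAddGroup.mk_zsmul, QuotientAddGroup.eq_zero_iff]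
        exact ⟨x, x.2, rfl⟩
    exact AddSubgroup.index_ne_zero_of_finite
  have hcomap : (D.comap π).relIndex ((D.comap μ).comap π) ≠ 0 := by
    have := AddSubgroup.relIndex_comap_ne_zero μ hfin
    rw [AddSubgroup.comap_map_eq_self_of_injective (zsmul_right_injective hn)] at this
    exact AddSubgroup.relIndex_comap_ne_zero π this
  have hDK : (D.comap π).relIndex K ≠ 0 :=
    fun h => hcomap (AddSubgroup.relIndex_eq_zero_of_le_right (fun k hk => hK k hk) h)
  rw [← AddSubgroup.inf_relIndex_right] at hDK
  exact ne_zero_of_dvd_ne_zero hDK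
    (AddSubgroup.relIndex_dvd_of_le_left K fun k hk => hH k hk.2 hk.1)

section RatAeval

variable {V : Type*} [AddCommGroup V] [Module ℝ V]

-- `V` carries no `ℚ`-module instance, so rational polynomials are evaluated through `ℝ[X]`.
noncomputable def ratAeval (A : Module.End ℝ V) : ℚ[X] →+* Module.End ℝ V :=
  (aeval A).toRingHom.comp (mapRingHom (algebraMap ℚ ℝ))

variable (A : Module.End ℝ V)

theorem ratAeval_map_int (Z : ℤ[X]) : ratAeval A (Z.map (algebraMap ℤ ℚ)) = aeval A Z := by
  have : (algebraMap ℚ ℝ).comp (algebraMap ℤ ℚ) = algebraMap ℤ ℝ := Subsingleton.elim _ _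
  rw [ratAeval, RingHom.comp_apply, coe_mapRingHom, map_map, this]
  exact aeval_map_algebraMap ℝ A Z

theorem ratAeval_apply_self_apply (p : ℚ[X]) (v : V) :
    ratAeval A p (A v) = A (ratAeval A p v) := by
  have hX : ratAeval A X = A := by simp [ratAeval]
  have := ((Commute.all p X).map (ratAeval A)).eq
  rw [hX] at this
  exact LinearMap.congr_fun this v

variable {A}

theorem eq_zero_of_ratAeval_of_isCoprime {p q : ℚ[X]} (hpq : IsCoprime p q) {v : V}
    (hp : ratAeval A p v = 0) (hq : ratAeval A q v = 0) : v = 0 := by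
  obtain ⟨a, b, hab⟩ := hpq
  have := congrArg (fun p => ratAeval A p v) hab
  simpa [Module.End.mul_apply, hp, hq] using this.symm

theorem ratAeval_apply_eq_zero_of_isCoprime {g h p : ℚ[X]} (hhp : IsCoprime h p) {v : V}
    (hgh : ratAeval A (g * h) v = 0) (hp : ratAeval A p v = 0) : ratAeval A g v = 0 := by
  refine eq_zero_of_ratAeval_of_isCoprime (A := A) hhp ?_ ?_
  · rwa [← Module.End.mul_apply, ← map_mul, mul_comm]
  · rw [← Module.End.mul_apply, ← map_mul, mul_comm, map_mul, Module.End.mul_apply, hp, map_zero]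

theorem mem_inf_ker_of_nsmul_mem {W : Type*} [AddCommGroup W] [Module ℝ W] {K : AddSubgroup V}
    (B : V →ₗ[ℝ] W) {k : V} (hk : k ∈ K)
    {n : ℕ} (hn : n ≠ 0) (hnk : n • k ∈ K ⊓ (LinearMap.ker B).toAddSubgroup) :
    k ∈ K ⊓ (LinearMap.ker B).toAddSubgroup := by
  refine ⟨hk, ?_⟩
  have : (n : ℝ) • B k = 0 := by simpa [Nat.cast_smul_eq_nsmul] using hnk.2
  simpa [hn] using this

noncomputable def kerRatAeval (T : V ≃ₗ[ℝ] V) (p : ℚ[X]) : AddSubgroup V :=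
  (LinearMap.ker (ratAeval (T : Module.End ℝ V) p)).toAddSubgroup

variable {T : V ≃ₗ[ℝ] V}

theorem mem_kerRatAeval {p : ℚ[X]} {v : V} :
    v ∈ kerRatAeval T p ↔ ratAeval (T : Module.End ℝ V) p v = 0 :=
  Iff.rfl

theorem isBiInvariant_kerRatAeval (p : ℚ[X]) : IsBiInvariant T (kerRatAeval T p) := by
  intro v hv
  rw [mem_kerRatAeval] at hv
  have hT := ratAeval_apply_self_apply (T : Module.End ℝ V) p
  simp only [LinearEquiv.coe_coe] at hT
  refine ⟨by rw [mem_kerRatAeval, hT, hv, map_zero], T.injective ?_⟩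
  rw [← hT, LinearEquiv.apply_symm_apply, hv, map_zero]

theorem inf_kerRatAeval_le_invariantCore {K L : AddSubgroup V} (hTL : ∀ v ∈ L, T v ∈ L)
    (hKL : ∀ k ∈ K, ∃ i : ℤ, (T ^ i) k ∈ L) {Z : ℤ[X]} (hZ : IsUnit (Z.coeff 0)) {g : ℚ[X]}
    (hg : g ∣ Z.map (algebraMap ℤ ℚ)) : K ⊓ kerRatAeval T g ≤ invariantCore T L := by
  have hg' := isBiInvariant_kerRatAeval (T := T) g
  have hLg : IsBiInvariant T (L ⊓ kerRatAeval T g) := by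
    intro w ⟨hwL, hwg⟩
    have hZw : aeval (T : Module.End ℝ V) Z w = 0 := by
      obtain ⟨e, he⟩ := hg
      rw [← ratAeval_map_int, he, mul_comm, map_mul, Module.End.mul_apply,
        mem_kerRatAeval.1 hwg, map_zero]
    exact ⟨⟨hTL w hwL, (hg' w hwg).1⟩,
      ⟨symm_apply_mem_of_aeval_eq_zero T hTL hZ hwL hZw, (hg' w hwg).2⟩⟩
  rintro k ⟨hk, hkg⟩
  obtain ⟨i, hi⟩ := hKL k hk
  have := hLg.le_invariantCore inf_le_left ⟨hi, hg'.zpow_apply_mem i hkg⟩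
  simpa using isBiInvariant_invariantCore.zpow_apply_mem (-i) this

theorem relIndex_sup_inf_kerRatAeval_ne_zero {K : AddSubgroup V} {g h : ℚ[X]}
    (hK : ∀ v ∈ K, T v ∈ K) (hgh : IsCoprime g h)
    (hf : ratAeval (T : Module.End ℝ V) (g * h) = 0) (hfg : (K ⊓ kerRatAeval T g).FG) :
    (K ⊓ kerRatAeval T g ⊔ K ⊓ kerRatAeval T h).relIndex K ≠ 0 := by
  have : IsAddTorsionFree V := .of_isTorsionFree ℝ V
  set E := ratAeval (T : Module.End ℝ V)
  obtain ⟨a, b, hab⟩ := hgh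
  obtain ⟨n, hn, Z, hZ⟩ : ∃ n : ℤ, n ≠ 0 ∧ ∃ Z : ℤ[X], Z.map (algebraMap ℤ ℚ) = n • (b * h) :=
    let ⟨n, hn, hZ⟩ := IsLocalization.integerNormalization_spec (nonZeroDivisors ℤ) (b * h)
    ⟨n, nonZeroDivisors.ne_zero hn, _, hZ⟩
  have hgπ : ∀ v, E g (E (b * h) v) = 0 := fun v => by
    rw [← Module.End.mul_apply, ← map_mul, show g * (b * h) = b * (g * h) by ring, map_mul, hf,
      mul_zero, LinearMap.zero_apply]
  have hhπ : ∀ v, E h (E (a * g) v) = 0 := fun v => by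
    rw [← Module.End.mul_apply, ← map_mul, show h * (a * g) = a * (g * h) by ring, map_mul, hf,
      mul_zero, LinearMap.zero_apply]
  have hsum : ∀ v, E (a * g) v + E (b * h) v = v := fun v => by
    rw [← LinearMap.add_apply, ← map_add, hab, map_one, Module.End.one_apply]
  refine hfg.relIndex_ne_zero_of_zsmul_mem (E (b * h)).toAddMonoidHom hn (fun k hk => ⟨?_, ?_⟩)
    fun k hk hπk => ?_
  · have : n • E (b * h) k = aeval (T : Module.End ℝ V) Z k := by
      rw [← ratAeval_map_int, hZ, map_zsmul, LinearMap.smul_apply]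
    change n • E (b * h) k ∈ K
    rw [this]
    exact aeval_int_apply_mem _ hK Z hk
  · change E g (n • E (b * h) k) = 0
    rw [map_zsmul, hgπ, smul_zero]
  · have hagk : E (a * g) k ∈ K := by
      rw [eq_sub_of_add_eq (hsum k)]
      exact sub_mem hk hπk.1
    rw [← hsum k]
    exact add_mem (AddSubgroup.mem_sup_right ⟨hagk, hhπ k⟩) (AddSubgroup.mem_sup_left hπk)

theorem exists_splitting_of_eq_inf_kerRatAeval {K D : AddSubgroup V} {g h : ℚ[X]}
    (hK : IsBiInvariant T K) (hgh : IsCoprime g h)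
    (hf : ratAeval (T : Module.End ℝ V) (g * h) = 0) (hD : D = K ⊓ kerRatAeval T g)
    (hDfg : D.FG) :
    ∃ K' Kc : AddSubgroup V, D ≤ K' ∧ K' ≤ K ∧ Kc ≤ K' ∧ (K'.addSubgroupOf K).index ≠ 0 ∧
      IsBiInvariant T K' ∧ IsBiInvariant T Kc ∧ D ⊓ Kc = ⊥ ∧ D ⊔ Kc = K' ∧
      (∀ k ∈ K, ∀ n : ℕ, n ≠ 0 → n • k ∈ D → k ∈ D) ∧
      (∀ k ∈ K, ∀ n : ℕ, n ≠ 0 → n • k ∈ Kc → k ∈ Kc) := by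
  subst hD
  have hKh := hK.inf (isBiInvariant_kerRatAeval h)
  refine ⟨_ ⊔ K ⊓ kerRatAeval T h, K ⊓ kerRatAeval T h, le_sup_left,
    sup_le inf_le_left inf_le_left, le_sup_right,
    relIndex_sup_inf_kerRatAeval_ne_zero (fun v hv => (hK v hv).1) hgh hf hDfg,
    (hK.inf (isBiInvariant_kerRatAeval g)).sup hKh, hKh, ?_, rfl,
    fun k hk n hn hnk => mem_inf_ker_of_nsmul_mem _ hk hn hnk,
    fun k hk n hn hnk => mem_inf_ker_of_nsmul_mem _ hk hn hnk⟩
  rw [eq_bot_iff]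
  rintro v ⟨⟨-, hvg⟩, -, hvh⟩
  exact eq_zero_of_ratAeval_of_isCoprime hgh hvg hvh

end RatAeval

theorem splitting_lemma_general {V : Type*} [NormedAddCommGroup V] [NormedSpace ℝ V]
    [FiniteDimensional ℝ V] (T : V ≃ₗ[ℝ] V) (K L : AddSubgroup V)
    (hTK : ∀ v : V, v ∈ K ↔ T v ∈ K) (hTL : ∀ v ∈ L, T v ∈ L)
    (hLlat : IsLatticeIn V L) (hLK : L ≤ K)
    (hunion : ∀ k ∈ K, ∃ i : ℤ, (T ^ i) k ∈ L)
    (Kd : AddSubgroup V)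
    (hKd : Kd = ⨅ i : ℤ, AddSubgroup.comap ((T ^ i).toLinearMap).toAddMonoidHom L) :
    ∃ K' Kc : AddSubgroup V,
      Kd ≤ K' ∧ K' ≤ K ∧ Kc ≤ K' ∧
      (K'.addSubgroupOf K).index ≠ 0 ∧
      (∀ v ∈ K', T v ∈ K' ∧ T.symm v ∈ K') ∧
      (∀ v ∈ Kc, T v ∈ Kc ∧ T.symm v ∈ Kc) ∧
      Kd ⊓ Kc = ⊥ ∧ Kd ⊔ Kc = K' ∧
      (∀ k ∈ K, ∀ n : ℕ, n ≠ 0 → n • k ∈ Kd → k ∈ Kd) ∧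
      (∀ k ∈ K, ∀ n : ℕ, n ≠ 0 → n • k ∈ Kc → k ∈ Kc) := by
  obtain rfl : Kd = invariantCore T L := hKd
  obtain ⟨b, hb⟩ := hLlat
  have hK : IsBiInvariant T K := fun v hv => ⟨(hTK v).1 hv, (hTK _).2 (by simpa using hv)⟩
  have hLfg : L.FG := (AddSubgroup.fg_iff L).2 ⟨_, hb.symm, Set.finite_range b⟩
  have hKdfg := hLfg.of_le (invariantCore_le (T := T))
  have : IsAddTorsionFree V := .of_isTorsionFree ℝ V
  obtain ⟨q, hq, hqKd⟩ :=
    exists_isUnit_coeff_zero_aeval_eq_zero_of_fg T hKdfg isBiInvariant_invariantCore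
  obtain ⟨f, hfm, hfL⟩ := exists_monic_aeval_eq_zero_of_fg (T : Module.End ℝ V) hLfg hTL
  have hf : aeval (T : Module.End ℝ V) f = 0 :=
    b.ext fun i => hfL _ (hb ▸ AddSubgroup.subset_closure ⟨i, rfl⟩)
  obtain ⟨g, h, hfgh, ⟨n, hgq⟩, hhq⟩ :=
    exists_mul_eq_dvd_pow_isCoprime (q.map (algebraMap ℤ ℚ)) (hfm.map (algebraMap ℤ ℚ)).ne_zero
  have hghT : ratAeval (T : Module.End ℝ V) (g * h) = 0 := by rw [hfgh, ratAeval_map_int, hf]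
  refine exists_splitting_of_eq_inf_kerRatAeval hK
    (hhq.pow_right.of_isCoprime_of_dvd_right hgq).symm hghT (le_antisymm ?_ ?_) hKdfg
  · refine le_inf (invariantCore_le.trans hLK) fun v hv =>
      ratAeval_apply_eq_zero_of_isCoprime hhq (by rw [hghT, LinearMap.zero_apply]) ?_
    rw [ratAeval_map_int]
    exact hqKd v hv
  · exact inf_kerRatAeval_le_invariantCore (Z := q ^ n) hTL hunion
      (by simpa [coeff_zero_eq_eval_zero] using hq.pow n) (by rwa [Polynomial.map_pow])

/-- Splitting Lemma. Let `K` be a finite-rank torsion-free abelian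
group (realized inside `V = K ⊗ ℝ`), `T` a hyperbolic automorphism of `K`, and `L` a
full-rank lattice in `K` with `T(L) ⊆ L` and `⋃_{i∈ℤ} Tⁱ(L) = K`. Let
`K_d = ⋂_{i∈ℤ} Tⁱ(L)`. Then there exist a finite-index subgroup `K'` of `K`
containing `K_d`, invariant under `T` and `T⁻¹`, and a `T`- and `T⁻¹`-invariant
subgroup `K_c ≤ K'` such that `K' = K_d ⊕ K_c` (internally), with `K/K_d` and
`K/K_c` both torsion-free. -/
theorem splitting_lemma {V : Type*} [NormedAddCommGroup V] [NormedSpace ℝ V]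
    [FiniteDimensional ℝ V] (T : V ≃ₗ[ℝ] V) (K L : AddSubgroup V)
    (hTK : ∀ v : V, v ∈ K ↔ T v ∈ K) (hTL : ∀ v ∈ L, T v ∈ L)
    (hLlat : IsLatticeIn V L) (hLK : L ≤ K)
    (htor : ∀ k ∈ K, ∃ n : ℕ, 0 < n ∧ n • k ∈ L)
    (heig : ∀ z : ℂ, (((T : V →ₗ[ℝ] V).charpoly).map (algebraMap ℝ ℂ)).IsRoot z →
      ‖z‖ ≠ 1)
    (hunion : ∀ k ∈ K, ∃ i : ℤ, (T ^ i) k ∈ L)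
    (Kd : AddSubgroup V)
    (hKd : Kd = ⨅ i : ℤ, AddSubgroup.comap ((T ^ i).toLinearMap).toAddMonoidHom L) :
    ∃ K' Kc : AddSubgroup V,
      Kd ≤ K' ∧ K' ≤ K ∧ Kc ≤ K' ∧
      (K'.addSubgroupOf K).index ≠ 0 ∧
      (∀ v ∈ K', T v ∈ K' ∧ T.symm v ∈ K') ∧
      (∀ v ∈ Kc, T v ∈ Kc ∧ T.symm v ∈ Kc) ∧
      Kd ⊓ Kc = ⊥ ∧ Kd ⊔ Kc = K' ∧
      (∀ k ∈ K, ∀ n : ℕ, n ≠ 0 → n • k ∈ Kd → k ∈ Kd) ∧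
      (∀ k ∈ K, ∀ n : ℕ, n ≠ 0 → n • k ∈ Kc → k ∈ Kc) :=
  splitting_lemma_general T K L hTK hTL hLlat hLK hunion Kd hKd
end
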